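/- Let α₋, α₊ : ℝ² → ℝ_{>0} be smooth functions satisfying the Toda system (⋆) on all of ℝ², and suppose in addition that α₋² + α₊² = 1 everywhere on ℝ². Then α₋ and α₊ are both constant equal to 1/√2. -/

import Mathlib

noncomputable section

/-- The flat Laplacian `Δ₀ f = ∂²f/∂x² + ∂²f/∂y²` on (an open subset of) `ℝ²`. -/
def flatLaplacian (f : ℝ × ℝ → ℝ) (p : ℝ × ℝ) : ℝ :=
  iteratedDeriv 2 (fun t => f (t, p.2)) p.1 + iteratedDeriv 2 (fun t => f (p.1, t)) p.2

/-- The Toda system (⋆): `Δ₀ log(α₋²) = −4(3α₋² + α₊² − 2)γ²` and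
`Δ₀ log(α₊²) = −4(3α₊² + α₋² − 2)γ²`, where `γ² = (α₋α₊)^{−1/2}`, on `U`. -/
def TodaSystem (U : Set (ℝ × ℝ)) (αm αp : ℝ × ℝ → ℝ) : Prop :=
  ∀ p ∈ U,
    flatLaplacian (fun q => Real.log (αm q ^ 2)) p =
      -4 * (3 * αm p ^ 2 + αp p ^ 2 - 2) * (αm p * αp p) ^ (-(1 / 2) : ℝ) ∧
    flatLaplacian (fun q => Real.log (αp q ^ 2)) p =
      -4 * (3 * αp p ^ 2 + αm p ^ 2 - 2) * (αm p * αp p) ^ (-(1 / 2) : ℝ)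

open Complex MeasureTheory intervalIntegral Set

/-! ### Auxiliary lemmas -/


lemma line_deriv (φ : ℂ → ℝ) (hφ : Differentiable ℝ φ) (c w : ℂ) (t : ℝ) :
    HasDerivAt (fun s : ℝ => φ (c + s • w)) (fderiv ℝ φ (c + t • w) w) t := by
  have hl : HasDerivAt (fun s : ℝ => c + s • w) w t := by
    simpa using ((hasDerivAt_id t).smul_const w).const_add c
  exact (hφ _).hasFDerivAt.comp_hasDerivAt t hl

lemma second_deriv_line (φ : ℂ → ℝ) (hφ : ContDiff ℝ (⊤ : ℕ∞) φ) (c w : ℂ) (x : ℝ) :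
    iteratedDeriv 2 (fun s : ℝ => φ (c + s • w)) x
      = fderiv ℝ (fun z => fderiv ℝ φ z w) (c + x • w) w := by
  have hφ1 : Differentiable ℝ φ := hφ.differentiable (by simp)
  have hu : ContDiff ℝ (⊤ : ℕ∞) (fun z => fderiv ℝ φ z w) :=
    (hφ.fderiv_right (by simp)).clm_apply contDiff_const
  have h1 : deriv (fun s : ℝ => φ (c + s • w)) = fun s => fderiv ℝ φ (c + s • w) w := by
    funext s; exact (line_deriv φ hφ1 c w s).deriv
  rw [show (2:ℕ) = 1 + 1 from rfl, iteratedDeriv_succ, iteratedDeriv_one, h1]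
  exact (line_deriv _ (hu.differentiable (by simp)) c w x).deriv


lemma clm_ext_complex {F : Type*} [NormedAddCommGroup F] [NormedSpace ℝ F]
    (A B : ℂ →L[ℝ] F) (h1 : A 1 = B 1) (hI : A I = B I) : A = B := by
  ext z
  have hz : z = z.re • (1:ℂ) + z.im • I := by
    simp [Complex.real_smul]
  rw [hz, map_add, map_add, A.map_smul, A.map_smul, B.map_smul, B.map_smul, h1, hI]

lemma hasDerivAt_of_CR {g : ℂ → ℂ} {z : ℂ} {A : ℂ →L[ℝ] ℂ}
    (h : HasFDerivAt g A z) (hCR : A I = I * A 1) : HasDerivAt g (A 1) z := by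
  have hext : (ContinuousLinearMap.smulRight (1 : ℂ →L[ℂ] ℂ) (A 1)).restrictScalars ℝ = A := by
    apply clm_ext_complex
    · simp
    · simp [hCR, mul_comm]
  simpa using (hasFDerivAt_of_restrictScalars ℝ h hext).hasDerivAt

section Liouville
variable (H : ℂ → ℝ)

-- second partials via fderiv of directional derivatives
lemma fderiv_dir_apply (hH : ContDiff ℝ (⊤ : ℕ∞) H) (w w' : ℂ) (z : ℂ) :
    fderiv ℝ (fun y => fderiv ℝ H y w) z w' = fderiv ℝ (fderiv ℝ H) z w' w := by
  have hd : DifferentiableAt ℝ (fderiv ℝ H) z :=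
    ((hH.fderiv_right (m := 1) (WithTop.coe_le_coe.2 le_top)).differentiable (by simp)).differentiableAt
  rw [fderiv_clm_apply hd (differentiableAt_const w)]
  simp

lemma sym_snd (hH : ContDiff ℝ (⊤ : ℕ∞) H) (z : ℂ) (w w' : ℂ) :
    fderiv ℝ (fderiv ℝ H) z w w' = fderiv ℝ (fderiv ℝ H) z w' w := by
  apply second_derivative_symmetric_of_eventually_of_real
    (Filter.Eventually.of_forall fun y => ((hH.differentiable (by simp)) y).hasFDerivAt)
  exact (((hH.fderiv_right (m := 1) (WithTop.coe_le_coe.2 le_top)).differentiable (by simp)) z).hasFDerivAt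

lemma g_hasDeriv (hH : ContDiff ℝ (⊤ : ℕ∞) H)
    (hharm : ∀ z, fderiv ℝ (fun y => fderiv ℝ H y 1) z 1
                 + fderiv ℝ (fun y => fderiv ℝ H y I) z I = 0) (z : ℂ) :
    HasDerivAt (fun y => (fderiv ℝ H y 1 : ℂ) - (fderiv ℝ H y I : ℂ) * I)
      ((fderiv ℝ (fun y => fderiv ℝ H y 1) z 1 : ℂ)
        - (fderiv ℝ (fun y => fderiv ℝ H y I) z 1 : ℂ) * I) z := by
  have husm : ContDiff ℝ (⊤ : ℕ∞) (fun y => fderiv ℝ H y 1) :=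
    (hH.fderiv_right (by simp)).clm_apply contDiff_const
  have hvsm : ContDiff ℝ (⊤ : ℕ∞) (fun y => fderiv ℝ H y I) :=
    (hH.fderiv_right (by simp)).clm_apply contDiff_const
  have hU : HasFDerivAt (fun y => fderiv ℝ H y 1) (fderiv ℝ (fun y => fderiv ℝ H y 1) z) z :=
    ((husm.differentiable (by simp)) z).hasFDerivAt
  have hV : HasFDerivAt (fun y => fderiv ℝ H y I) (fderiv ℝ (fun y => fderiv ℝ H y I) z) z :=
    ((hvsm.differentiable (by simp)) z).hasFDerivAt
  have hUc : HasFDerivAt (fun y => (fderiv ℝ H y 1 : ℂ))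
      (Complex.ofRealCLM.comp (fderiv ℝ (fun y => fderiv ℝ H y 1) z)) z :=
    Complex.ofRealCLM.hasFDerivAt.comp z hU
  have hVc : HasFDerivAt (fun y => (fderiv ℝ H y I : ℂ) * I)
      ((Complex.ofRealCLM.comp (fderiv ℝ (fun y => fderiv ℝ H y I) z)).smulRight I) z := by
    have := (Complex.ofRealCLM.hasFDerivAt.comp z hV).mul_const I
    refine this.congr_fderiv ?_
    ext w; simp [ContinuousLinearMap.smulRight_apply, smul_eq_mul, mul_comm]
  have hA := hUc.sub hVc
  have hCR1 : fderiv ℝ (fun y => fderiv ℝ H y 1) z I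
      = fderiv ℝ (fun y => fderiv ℝ H y I) z 1 := by
    rw [fderiv_dir_apply H hH, fderiv_dir_apply H hH, sym_snd H hH]
  have hCR2 : fderiv ℝ (fun y => fderiv ℝ H y I) z I
      = - fderiv ℝ (fun y => fderiv ℝ H y 1) z 1 := by
    have := hharm z; linarith
  have key := hasDerivAt_of_CR hA ?_
  · exact key.congr_deriv (by simp [ContinuousLinearMap.smulRight_apply])
  · simp only [ContinuousLinearMap.sub_apply, ContinuousLinearMap.coe_comp',
      Function.comp_apply, ContinuousLinearMap.smulRight_apply, Complex.ofRealCLM_apply,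
      smul_eq_mul, hCR1, hCR2]
    push_cast
    linear_combination ((fderiv ℝ (fun y => fderiv ℝ H y I) z 1 : ℝ) : ℂ) * Complex.I_sq
end Liouville


lemma primitive_hasDerivAt (g d : ℂ → ℂ) (hg : ∀ z, HasDerivAt g (d z) z)
    (hgc : Continuous g) (hdc : Continuous d) (z₀ : ℂ) :
    HasDerivAt (fun z => ∫ t in (0:ℝ)..1, z * g ((t : ℝ) • z)) (g z₀) z₀ := by
  classical
  set c : ℂ → ℝ → ℂ := fun z t => g ((t:ℝ) • z) + z * (d ((t:ℝ) • z) * (t:ℂ)) with hcdef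
  set F' : ℂ → ℝ → ℂ →L[ℝ] ℂ := fun z t =>
    (ContinuousLinearMap.smulRight (1 : ℂ →L[ℂ] ℂ) (c z t)).restrictScalars ℝ with hF'def
  have hsmul : Continuous fun p : ℂ × ℝ => (p.2 : ℝ) • p.1 := by fun_prop
  have hccont : Continuous fun p : ℂ × ℝ => c p.1 p.2 := by
    apply Continuous.add
    · exact hgc.comp hsmul
    · exact continuous_fst.mul ((hdc.comp hsmul).mul (continuous_ofReal.comp continuous_snd))
  have hc_cont1 : ∀ z, Continuous fun t : ℝ => c z t := fun z =>
    hccont.comp (Continuous.prodMk_right z)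
  have hF'cont : Continuous fun t : ℝ => F' z₀ t := by
    have h1 : Continuous fun e : ℂ →L[ℂ] ℂ => e.restrictScalars ℝ :=
      (ContinuousLinearMap.restrictScalarsIsometry ℂ ℂ ℂ ℝ ℝ).continuous
    have h2 : Continuous fun y : ℂ => ContinuousLinearMap.smulRight (1 : ℂ →L[ℂ] ℂ) y :=
      ((ContinuousLinearMap.smulRightL ℂ ℂ ℂ) (1 : ℂ →L[ℂ] ℂ)).continuous
    exact h1.comp (h2.comp (hc_cont1 z₀))
  -- derivative in z at fixed t
  have hderiv : ∀ (t : ℝ) (z : ℂ), HasDerivAt (fun z => z * g ((t:ℝ) • z)) (c z t) z := by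
    intro t z
    have h1 : HasDerivAt (fun z : ℂ => (t:ℝ) • z) ((t:ℂ)) z := by
      simpa [Complex.real_smul, mul_one] using (hasDerivAt_id z).const_mul (t:ℂ)
    have h2 : HasDerivAt (fun z => g ((t:ℝ) • z)) (d ((t:ℝ) • z) * (t:ℂ)) z :=
      (hg ((t:ℝ) • z)).comp z h1
    have h3 := (hasDerivAt_id z).mul h2
    exact h3.congr_deriv (by simp [hcdef])
  have hF'fderiv : ∀ (t : ℝ) (z : ℂ), HasFDerivAt (fun z => z * g ((t:ℝ) • z)) (F' z t) z :=
    fun t z => ((hderiv t z).hasFDerivAt).restrictScalars ℝ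
  -- bound
  set R := ‖z₀‖ + 1 with hR
  obtain ⟨C, hC⟩ := (isCompact_closedBall (0:ℂ) R).exists_bound_of_continuousOn
    (f := fun w => ‖g w‖ + R * ‖d w‖)
    ((hgc.norm.add (continuous_const.mul hdc.norm)).continuousOn)
  have hnorm : ∀ (z : ℂ) (t : ℝ), ‖F' z t‖ ≤ ‖c z t‖ := by
    intro z t
    refine ContinuousLinearMap.opNorm_le_bound _ (norm_nonneg _) fun w => ?_
    rw [hF'def]
    simp only [ContinuousLinearMap.coe_restrictScalars', ContinuousLinearMap.smulRight_apply,
      ContinuousLinearMap.one_apply, smul_eq_mul, norm_mul]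
    exact le_of_eq (mul_comm _ _)
  have hbound : ∀ t ∈ Set.Ioc (0:ℝ) 1, ∀ z ∈ Metric.ball z₀ 1, ‖F' z t‖ ≤ C := by
    intro t ht z hz
    have hzR : ‖z‖ ≤ R := by
      have := norm_sub_norm_le z z₀
      have h2 : ‖z - z₀‖ < 1 := by simpa [dist_eq_norm] using hz
      rw [hR]; linarith
    have habs : |t| ≤ 1 := by rw [abs_le]; constructor <;> [linarith [ht.1]; exact ht.2]
    have htz : (t:ℝ) • z ∈ Metric.closedBall (0:ℂ) R := by
      simp only [Metric.mem_closedBall, dist_zero_right, norm_smul, Real.norm_eq_abs]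
      nlinarith [norm_nonneg z, abs_nonneg t]
    refine (hnorm z t).trans ?_
    have hcle : ‖c z t‖ ≤ ‖g ((t:ℝ) • z)‖ + R * ‖d ((t:ℝ) • z)‖ := by
      have h2 : ‖z * (d ((t:ℝ) • z) * (t:ℂ))‖ ≤ R * ‖d ((t:ℝ) • z)‖ := by
        rw [norm_mul, norm_mul]
        have h1 : ‖(t:ℂ)‖ ≤ 1 := by simpa [Complex.norm_real, Real.norm_eq_abs] using habs
        exact mul_le_mul hzR (mul_le_of_le_one_right (norm_nonneg _) h1)
          (by positivity) (by rw [hR]; positivity)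
      exact (norm_add_le _ _).trans (by linarith)
    refine hcle.trans ?_
    have := hC _ htz
    calc ‖g ((t:ℝ) • z)‖ + R * ‖d ((t:ℝ) • z)‖
        ≤ |‖g ((t:ℝ) • z)‖ + R * ‖d ((t:ℝ) • z)‖| := le_abs_self _
      _ ≤ C := by simpa [Real.norm_eq_abs] using this
  -- apply differentiation under the integral sign
  have key : HasFDerivAt (fun z => ∫ t in (0:ℝ)..1, z * g ((t:ℝ) • z))
      (∫ t in (0:ℝ)..1, F' z₀ t) z₀ := by
    apply hasFDerivAt_integral_of_dominated_of_fderiv_le'' (s := Metric.ball z₀ 1) (bound := fun _ => C)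
      (Metric.ball_mem_nhds z₀ one_pos)
    · filter_upwards with z
      exact (Continuous.aestronglyMeasurable
        (continuous_const.mul (hgc.comp (by fun_prop)))).restrict
    · exact (continuous_const.mul (hgc.comp (by fun_prop))).intervalIntegrable 0 1
    · exact hF'cont.aestronglyMeasurable.restrict
    · refine (ae_restrict_iff' measurableSet_uIoc).2 (Filter.Eventually.of_forall fun t ht => ?_)
      have ht' : t ∈ Set.Ioc (0:ℝ) 1 := by rwa [Set.uIoc_of_le zero_le_one] at ht
      exact fun z hz => hbound t ht' z hz
    · exact intervalIntegrable_const
    · exact Filter.Eventually.of_forall fun t => fun z _ => hF'fderiv t z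
  -- compute the integral of F'
  have hFTC : (∫ t in (0:ℝ)..1, c z₀ t) = g z₀ := by
    have hψ : ∀ t ∈ uIcc (0:ℝ) 1,
        HasDerivAt (fun s : ℝ => (s:ℂ) * g ((s:ℝ) • z₀)) (c z₀ t) t := by
      intro t _
      have h1 : HasDerivAt (fun s : ℝ => (s:ℝ) • z₀) z₀ t := by
        simpa using (hasDerivAt_id t).smul_const z₀
      have h2 : HasDerivAt (fun s : ℝ => g ((s:ℝ) • z₀)) (z₀ • d ((t:ℝ) • z₀)) t := by
        have := ((hg ((t:ℝ) • z₀)).hasFDerivAt.restrictScalars ℝ).comp_hasDerivAt t h1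
        simpa [Function.comp_def] using this
      have h0 : HasDerivAt (fun s : ℝ => (s:ℂ)) 1 t := by
        exact (hasDerivAt_id t).ofReal_comp
      have := h0.mul h2
      refine this.congr_deriv ?_
      simp [hcdef, smul_eq_mul]
      ring
    have hint : IntervalIntegrable (fun t => c z₀ t) volume 0 1 :=
      (hc_cont1 z₀).intervalIntegrable 0 1
    have := integral_eq_sub_of_hasDerivAt hψ hint
    simpa using this
  have hIntF' : (∫ t in (0:ℝ)..1, F' z₀ t)
      = (ContinuousLinearMap.smulRight (1 : ℂ →L[ℂ] ℂ) (g z₀)).restrictScalars ℝ := by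
    ext w
    rw [intervalIntegral.integral_of_le zero_le_one]
    rw [ContinuousLinearMap.integral_apply]
    · have heq : ∀ t, F' z₀ t w = w * c z₀ t := by
        intro t
        simp [hF'def, smul_eq_mul]
      simp_rw [heq]
      rw [← intervalIntegral.integral_of_le zero_le_one,
        intervalIntegral.integral_const_mul, hFTC]
      simp [smul_eq_mul]
    · exact (hF'cont.integrableOn_Ioc)
  rw [hIntF'] at key
  simpa using (hasFDerivAt_of_restrictScalars ℝ key rfl).hasDerivAt

lemma liouville_flat (h : ℝ × ℝ → ℝ) (hsm : ContDiff ℝ (⊤ : ℕ∞) h)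
    (hharm : ∀ p, flatLaplacian h p = 0) (M : ℝ) (hbd : ∀ p, h p ≤ M) (p q : ℝ × ℝ) :
    h p = h q := by
  classical
  set H : ℂ → ℝ := fun z => h (z.re, z.im) with hHdef
  have hH : ContDiff ℝ (⊤ : ℕ∞) H :=
    hsm.comp (Complex.equivRealProdCLM : ℂ ≃L[ℝ] ℝ × ℝ).toContinuousLinearMap.contDiff
  -- harmonicity in complex form
  have hharm' : ∀ z : ℂ, fderiv ℝ (fun y => fderiv ℝ H y 1) z 1
      + fderiv ℝ (fun y => fderiv ℝ H y I) z I = 0 := by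
    intro z
    have h1 : (fun t : ℝ => h (t, z.im)) = fun t : ℝ => H ((z.im : ℂ) * I + t • 1) := by
      funext t; simp [hHdef]
    have h2 : (fun t : ℝ => h (z.re, t)) = fun t : ℝ => H ((z.re : ℂ) + t • I) := by
      funext t; simp [hHdef]
    have key := hharm (z.re, z.im)
    unfold flatLaplacian at key
    simp only at key
    rw [h1, h2, second_deriv_line H hH _ _ _, second_deriv_line H hH _ _ _] at key
    have e1 : (z.im : ℂ) * I + (z.re : ℝ) • 1 = z := by
      apply Complex.ext <;> simp
    have e2 : (z.re : ℂ) + (z.im : ℝ) • I = z := by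
      apply Complex.ext <;> simp
    rw [e1, e2] at key
    exact key
  set g : ℂ → ℂ := fun y => (fderiv ℝ H y 1 : ℂ) - (fderiv ℝ H y I : ℂ) * I with hgdef
  set d : ℂ → ℂ := fun z => (fderiv ℝ (fun y => fderiv ℝ H y 1) z 1 : ℂ)
      - (fderiv ℝ (fun y => fderiv ℝ H y I) z 1 : ℂ) * I with hddef
  have husm : ContDiff ℝ (⊤ : ℕ∞) (fun y => fderiv ℝ H y 1) :=
    (hH.fderiv_right (by simp)).clm_apply contDiff_const
  have hvsm : ContDiff ℝ (⊤ : ℕ∞) (fun y => fderiv ℝ H y I) :=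
    (hH.fderiv_right (by simp)).clm_apply contDiff_const
  have hgc : Continuous g := by
    apply Continuous.sub
    · exact continuous_ofReal.comp husm.continuous
    · exact (continuous_ofReal.comp hvsm.continuous).mul continuous_const
  have hdc : Continuous d := by
    apply Continuous.sub
    · exact continuous_ofReal.comp
        ((((husm.fderiv_right (by simp)).clm_apply contDiff_const : ContDiff ℝ (⊤ : ℕ∞) _)).continuous)
    · exact (continuous_ofReal.comp
        ((((hvsm.fderiv_right (by simp)).clm_apply contDiff_const : ContDiff ℝ (⊤ : ℕ∞) _)).continuous)).mul
        continuous_const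
  have hg : ∀ z, HasDerivAt g (d z) z := fun z => g_hasDeriv H hH hharm' z
  set F : ℂ → ℂ := fun z => ∫ t in (0:ℝ)..1, z * g ((t : ℝ) • z) with hFdef
  have hF : ∀ z, HasDerivAt F (g z) z := primitive_hasDerivAt g d hg hgc hdc
  -- H - Re F has zero derivative
  have hconst : ∀ z w : ℂ, H z - (F z).re = H w - (F w).re := by
    have hdiff : Differentiable ℝ (fun z => H z - (F z).re) := by
      apply Differentiable.sub
      · exact hH.differentiable (by simp)
      · exact fun z => (Complex.reCLM.differentiableAt.comp z
          ((hF z).differentiableAt.restrictScalars ℝ))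
    intro z w
    apply is_const_of_fderiv_eq_zero hdiff
    intro x
    have hFd : HasFDerivAt F ((ContinuousLinearMap.smulRight (1 : ℂ →L[ℂ] ℂ)
        (g x)).restrictScalars ℝ) x := (hF x).hasFDerivAt.restrictScalars ℝ
    have hrd : HasFDerivAt (fun z => (F z).re)
        (Complex.reCLM.comp ((ContinuousLinearMap.smulRight (1 : ℂ →L[ℂ] ℂ)
        (g x)).restrictScalars ℝ)) x := Complex.reCLM.hasFDerivAt.comp x hFd
    have hHd : HasFDerivAt H (fderiv ℝ H x) x := ((hH.differentiable (by simp)) x).hasFDerivAt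
    have heq : Complex.reCLM.comp ((ContinuousLinearMap.smulRight (1 : ℂ →L[ℂ] ℂ)
        (g x)).restrictScalars ℝ) = fderiv ℝ H x := by
      apply clm_ext_complex
      · simp [hgdef]
      · simp [hgdef, Complex.add_im]
    have := (hHd.sub hrd).fderiv
    rw [heq] at this
    simp only [sub_self] at this
    exact this
  -- exp ∘ F is bounded entire
  set c₀ : ℝ := H 0 - (F 0).re with hc₀
  have hre : ∀ z, (F z).re = H z - c₀ := by
    intro z
    have := hconst z 0
    rw [hc₀]; linarith
  have hexp : Differentiable ℂ (fun z => Complex.exp (F z)) :=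
    fun z => ((hF z).differentiableAt).cexp
  have hbdd : Bornology.IsBounded (Set.range fun z => Complex.exp (F z)) := by
    apply isBounded_iff_forall_norm_le.2
    refine ⟨Real.exp (M - c₀), ?_⟩
    rintro y ⟨z, rfl⟩
    rw [Complex.norm_exp]
    apply Real.exp_le_exp.2
    rw [hre z]
    have : H z ≤ M := by
      have := hbd (z.re, z.im); simpa [hHdef] using this
    linarith
  have hval := hexp.apply_eq_apply_of_bounded hbdd
  -- conclude H constant
  have hHconst : ∀ z w : ℂ, H z = H w := by
    intro z w
    have h1 := hval z w
    have h2 : Real.exp ((F z).re) = Real.exp ((F w).re) := by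
      have := congrArg (‖·‖) h1
      rwa [Complex.norm_exp, Complex.norm_exp] at this
    have h3 := Real.exp_injective h2
    rw [hre z, hre w] at h3
    linarith
  have hp : h p = H (p.1 + p.2 * I) := by simp [hHdef]
  have hq : h q = H (q.1 + q.2 * I) := by simp [hHdef]
  rw [hp, hq, hHconst]


lemma iteratedDeriv_two_add (f g : ℝ → ℝ) (hf : ContDiff ℝ (⊤ : ℕ∞) f) (hg : ContDiff ℝ (⊤ : ℕ∞) g) (x : ℝ) :
    iteratedDeriv 2 (fun t => f t + g t) x = iteratedDeriv 2 f x + iteratedDeriv 2 g x := by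
  have hf1 : Differentiable ℝ f := hf.differentiable (by simp)
  have hg1 : Differentiable ℝ g := hg.differentiable (by simp)
  have hfd : Differentiable ℝ (deriv f) :=
    (contDiff_infty_iff_deriv.1 (hf.of_le (by simp))).2.differentiable (by simp)
  have hgd : Differentiable ℝ (deriv g) :=
    (contDiff_infty_iff_deriv.1 (hg.of_le (by simp))).2.differentiable (by simp)
  have hderiv : deriv (fun t => f t + g t) = fun t => deriv f t + deriv g t :=
    funext fun t => deriv_add (hf1 t) (hg1 t)
  rw [show (2:ℕ) = 1 + 1 from rfl, iteratedDeriv_succ, iteratedDeriv_one,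
    iteratedDeriv_succ, iteratedDeriv_one, iteratedDeriv_succ, iteratedDeriv_one, hderiv]
  exact deriv_add (hfd x) (hgd x)

lemma slice_smooth₁ (f : ℝ × ℝ → ℝ) (hf : ContDiff ℝ (⊤ : ℕ∞) f) (y : ℝ) :
    ContDiff ℝ (⊤ : ℕ∞) (fun t => f (t, y)) :=
  hf.comp (contDiff_id.prodMk contDiff_const)

lemma slice_smooth₂ (f : ℝ × ℝ → ℝ) (hf : ContDiff ℝ (⊤ : ℕ∞) f) (x : ℝ) :
    ContDiff ℝ (⊤ : ℕ∞) (fun t => f (x, t)) :=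
  hf.comp (contDiff_const.prodMk contDiff_id)

lemma flatLaplacian_add (f g : ℝ × ℝ → ℝ) (hf : ContDiff ℝ (⊤ : ℕ∞) f) (hg : ContDiff ℝ (⊤ : ℕ∞) g)
    (p : ℝ × ℝ) :
    flatLaplacian (fun q => f q + g q) p = flatLaplacian f p + flatLaplacian g p := by
  unfold flatLaplacian
  rw [iteratedDeriv_two_add _ _ (slice_smooth₁ f hf p.2) (slice_smooth₁ g hg p.2),
    iteratedDeriv_two_add _ _ (slice_smooth₂ f hf p.1) (slice_smooth₂ g hg p.1)]
  ring

lemma iteratedDeriv_two_of_eventually_const (g : ℝ → ℝ) (c x : ℝ)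
    (hev : ∀ᶠ t in nhds x, g t = c) : iteratedDeriv 2 g x = 0 := by
  rw [show (2:ℕ) = 1 + 1 from rfl, iteratedDeriv_succ, iteratedDeriv_one]
  obtain ⟨U, hU, hUopen, hxU⟩ := eventually_nhds_iff.1 hev
  have hderiv0 : ∀ᶠ t in nhds x, deriv g t = (fun _ => (0:ℝ)) t := by
    apply eventually_nhds_iff.2 ⟨U, ?_, hUopen, hxU⟩
    intro y hy
    have h1 : g =ᶠ[nhds y] fun _ => c := eventually_nhds_iff.2 ⟨U, hU, hUopen, hy⟩
    rw [h1.deriv_eq, deriv_const]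
  rw [Filter.EventuallyEq.deriv_eq hderiv0, deriv_const]

lemma flatLaplacian_eventually_const (f : ℝ × ℝ → ℝ) (c : ℝ) (p : ℝ × ℝ)
    (hev : ∀ᶠ q in nhds p, f q = c) : flatLaplacian f p = 0 := by
  have h1 : ∀ᶠ t in nhds p.1, f (t, p.2) = c := by
    have hcont : Continuous fun t : ℝ => (t, p.2) := continuous_id.prodMk continuous_const
    have ht : Filter.Tendsto (fun t : ℝ => (t, p.2)) (nhds p.1) (nhds p) := by
      have := hcont.tendsto p.1
      simpa using this
    exact ht.eventually hev
  have h2 : ∀ᶠ t in nhds p.2, f (p.1, t) = c := by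
    have hcont : Continuous fun t : ℝ => (p.1, t) := continuous_const.prodMk continuous_id
    have ht : Filter.Tendsto (fun t : ℝ => (p.1, t)) (nhds p.2) (nhds p) := by
      have := hcont.tendsto p.2
      simpa using this
    exact ht.eventually hev
  unfold flatLaplacian
  rw [iteratedDeriv_two_of_eventually_const _ c _ h1,
    iteratedDeriv_two_of_eventually_const _ c _ h2, add_zero]

theorem flat_transverse_curves_are_Clifford
    (αm αp : ℝ × ℝ → ℝ)
    (hpos : ∀ p, 0 < αm p ∧ 0 < αp p)
    (hsm : ContDiff ℝ (⊤ : ℕ∞) αm ∧ ContDiff ℝ (⊤ : ℕ∞) αp)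
    (htoda : TodaSystem Set.univ αm αp)
    (hflat : ∀ p, αm p ^ 2 + αp p ^ 2 = 1) :
    ∀ p, αm p = 1 / Real.sqrt 2 ∧ αp p = 1 / Real.sqrt 2 := by
  intro p₀
  have hαm := hsm.1
  have hαp := hsm.2
  have ham0 : ∀ q, αm q ^ 2 ≠ 0 := fun q => (pow_pos (hpos q).1 2).ne'
  have hap0 : ∀ q, αp q ^ 2 ≠ 0 := fun q => (pow_pos (hpos q).2 2).ne'
  have hla_sm : ContDiff ℝ (⊤ : ℕ∞) (fun q => Real.log (αm q ^ 2)) := (hαm.pow 2).log ham0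
  have hlb_sm : ContDiff ℝ (⊤ : ℕ∞) (fun q => Real.log (αp q ^ 2)) := (hαp.pow 2).log hap0
  set h : ℝ × ℝ → ℝ := fun q => Real.log (αm q ^ 2) + Real.log (αp q ^ 2) with hhdef
  have hh_sm : ContDiff ℝ (⊤ : ℕ∞) h := hla_sm.add hlb_sm
  have hharm : ∀ p, flatLaplacian h p = 0 := by
    intro p
    have htd := htoda p (Set.mem_univ p)
    rw [hhdef, flatLaplacian_add _ _ hla_sm hlb_sm p, htd.1, htd.2]
    have hf := hflat p
    linear_combination (-16 * ((αm p * αp p) ^ (-(1/2) : ℝ))) * hf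
  have hbd : ∀ p, h p ≤ 0 := by
    intro p
    have h1 : αm p ^ 2 ≤ 1 := by nlinarith [hflat p, sq_nonneg (αp p), (hpos p).2]
    have h2 : αp p ^ 2 ≤ 1 := by nlinarith [hflat p, sq_nonneg (αm p), (hpos p).1]
    have l1 := Real.log_nonpos (by positivity) h1
    have l2 := Real.log_nonpos (by positivity) h2
    rw [hhdef]; dsimp only; linarith
  have hconsth : ∀ p q : ℝ × ℝ, h p = h q := liouville_flat h hh_sm hharm 0 hbd
  have hprod : ∀ q, αm q ^ 2 * αp q ^ 2 = αm p₀ ^ 2 * αp p₀ ^ 2 := by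
    intro q
    have h1 : Real.exp (h q) = Real.exp (h p₀) := by rw [hconsth q p₀]
    have e1 : Real.exp (h q) = αm q ^ 2 * αp q ^ 2 := by
      rw [hhdef]
      rw [Real.exp_add, Real.exp_log (pow_pos (hpos q).1 2), Real.exp_log (pow_pos (hpos q).2 2)]
    have e2 : Real.exp (h p₀) = αm p₀ ^ 2 * αp p₀ ^ 2 := by
      rw [hhdef]
      rw [Real.exp_add, Real.exp_log (pow_pos (hpos p₀).1 2),
        Real.exp_log (pow_pos (hpos p₀).2 2)]
    rw [e1, e2] at h1
    exact h1
  have hsq : ∀ q, (αm q ^ 2 - 1/2) ^ 2 = (αm p₀ ^ 2 - 1/2) ^ 2 := by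
    intro q
    have h1 := hprod q
    have h2 := hflat q
    have h3 := hflat p₀
    linear_combination (-1 : ℝ) * h1 + (αm q ^ 2) * h2 - (αm p₀ ^ 2) * h3
  have hkey : αm p₀ ^ 2 = 1/2 := by
    by_contra hne
    have hs0 : αm p₀ ^ 2 - 1/2 ≠ 0 := fun hc => hne (by linarith)
    have habs : (0:ℝ) < 2 * |αm p₀ ^ 2 - 1/2| := by positivity
    have hacont : ContinuousAt (fun q => αm q ^ 2) p₀ := ((hαm.continuous).pow 2).continuousAt
    have hev : ∀ᶠ q in nhds p₀, dist (αm q ^ 2) (αm p₀ ^ 2) < 2 * |αm p₀ ^ 2 - 1/2| :=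
      Metric.tendsto_nhds.1 hacont _ habs
    have hev2 : ∀ᶠ q in nhds p₀, Real.log (αm q ^ 2) = Real.log (αm p₀ ^ 2) := by
      filter_upwards [hev] with q hq
      have h4 := hsq q
      have h5 : (αm q ^ 2 - αm p₀ ^ 2) * (αm q ^ 2 + αm p₀ ^ 2 - 1) = 0 := by
        linear_combination h4
      rcases mul_eq_zero.1 h5 with h6 | h6
      · rw [show αm q ^ 2 = αm p₀ ^ 2 by linarith]
      · exfalso
        rw [Real.dist_eq] at hq
        have h7 : αm q ^ 2 - αm p₀ ^ 2 = -(2 * (αm p₀ ^ 2 - 1/2)) := by linarith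
        rw [h7, abs_neg, abs_mul] at hq
        norm_num at hq
    have hlap0 : flatLaplacian (fun q => Real.log (αm q ^ 2)) p₀ = 0 :=
      flatLaplacian_eventually_const _ (Real.log (αm p₀ ^ 2)) p₀ hev2
    have htd := (htoda p₀ (Set.mem_univ p₀)).1
    rw [hlap0] at htd
    have hγ : (0:ℝ) < (αm p₀ * αp p₀) ^ (-(1/2) : ℝ) :=
      Real.rpow_pos_of_pos (mul_pos (hpos p₀).1 (hpos p₀).2) _
    have h6 : 3 * αm p₀ ^ 2 + αp p₀ ^ 2 - 2 = 2 * (αm p₀ ^ 2 - 1/2) := by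
      linarith [hflat p₀]
    rw [h6] at htd
    have h7 : -4 * (2 * (αm p₀ ^ 2 - 1/2)) * (αm p₀ * αp p₀) ^ (-(1/2) : ℝ) ≠ 0 := by
      apply mul_ne_zero
      · apply mul_ne_zero
        · norm_num
        · intro hc; apply hs0; linarith
      · exact hγ.ne'
    exact h7 htd.symm
  have hbkey : αp p₀ ^ 2 = 1/2 := by linarith [hflat p₀]
  constructor
  · have h1 : αm p₀ = Real.sqrt (1/2) := by
      rw [← Real.sqrt_sq (hpos p₀).1.le, hkey]
    rw [h1, one_div, one_div, Real.sqrt_inv]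
  · have h1 : αp p₀ = Real.sqrt (1/2) := by
      rw [← Real.sqrt_sq (hpos p₀).2.le, hbkey]
    rw [h1, one_div, one_div, Real.sqrt_inv]
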